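/- arXiv:2307.00667 — 2 statements merged into one kernel-verified Lean document; each statement's English description precedes it below -/
import Mathlib

section
/- Let K : ℝ × ℝ → ℝ be a function with values in (0, 1], twice differentiable in its first argument, satisfying K(a, a) = 1 and (∂K/∂z₁)(a, a) = 0 for a fixed a ∈ ℝ. Let φ : ℝ^d → ℝ be twice differentiable and set V(x) = −log K(φ(x), a). Then at every point x ∈ ℝ^d with φ(x) = a, the Hessian of V is the rank-one symmetric bilinear form ∇²V(x)(u, v) = −(∂²K/∂z₁²)(a, a) · ⟨∇φ(x), u⟩ · ⟨∇φ(x), v⟩ for all u, v ∈ ℝ^d. -/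
open RealInnerProductSpace

/-! At a point where `φ x = a`, the chain rule gives
`D²(h ∘ φ)(x)(u, v) = h''(a) Dφ(x)u Dφ(x)v + h'(a) D²φ(x)(u, v)` for `h = -log K(·, a)`.
Since `K(·, a)` is critical at `a`, so is `h`, and the second term vanishes; moreover
`h'' = -(K'' K - K'²) / K²` reduces to `-K''(a, a)` there because `K(a, a) = 1`. -/

theorem fderiv_fderiv_comp_apply_of_deriv_eq_zero {E : Type*} [NormedAddCommGroup E]
    [NormedSpace ℝ E] {h : ℝ → ℝ} {f : E → ℝ} {x : E} {c h₂ : ℝ}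
    (hh : Differentiable ℝ h) (hf : Differentiable ℝ f)
    (hf₂ : DifferentiableAt ℝ (fderiv ℝ f) x) (hx : f x = c)
    (hh₂ : HasDerivAt (deriv h) h₂ c) (hcrit : deriv h c = 0) (u v : E) :
    fderiv ℝ (fderiv ℝ (h ∘ f)) x u v = h₂ * (fderiv ℝ f x u * fderiv ℝ f x v) := by
  have hfirst : fderiv ℝ (h ∘ f) = fun y => deriv h (f y) • fderiv ℝ f y :=
    funext fun y => ((hh (f y)).hasDerivAt.comp_hasFDerivAt y (hf y).hasFDerivAt).fderiv
  have hcoef : HasFDerivAt (fun y => deriv h (f y)) (h₂ • fderiv ℝ f x) x :=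
    (hx ▸ hh₂).comp_hasFDerivAt x (hf x).hasFDerivAt
  rw [hfirst, fderiv_fun_smul hcoef.differentiableAt hf₂, hcoef.fderiv]
  simp only [hx, hcrit, zero_smul, zero_add, ContinuousLinearMap.smulRight_apply,
    smul_apply, smul_eq_mul]
  ring

theorem hasDerivAt_deriv_neg_log_of_deriv_eq_zero {g : ℝ → ℝ} {a : ℝ}
    (hg : Differentiable ℝ g) (hg₀ : ∀ z, g z ≠ 0) (hg₂ : DifferentiableAt ℝ (deriv g) a)
    (hcrit : deriv g a = 0) :
    HasDerivAt (deriv fun z => -Real.log (g z)) (-(deriv (deriv g) a / g a)) a := by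
  have hfirst : (deriv fun z => -Real.log (g z)) = fun z => -(deriv g z / g z) :=
    funext fun z => by rw [deriv.fun_neg, deriv.log (hg z) (hg₀ z)]
  rw [hfirst]
  refine (hg₂.hasDerivAt.div (hg a).hasDerivAt (hg₀ a)).fun_neg.congr_deriv ?_
  rw [hcrit, mul_zero, sub_zero, sq, mul_div_mul_right _ _ (hg₀ a)]

/-- For `K : ℝ × ℝ → ℝ` with values in `(0,1]`, twice differentiable in its first
argument, with `K(a,a) = 1` and `(∂K/∂z₁)(a,a) = 0`, and for a twice differentiable
`φ : ℝ^d → ℝ`, the Hessian of `V(x) = -log K(φ(x), a)` at any point `x` with `φ(x) = a` is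
the rank-one bilinear form
`∇²V(x)(u,v) = -(∂²K/∂z₁²)(a,a) ⬝ ⟪∇φ(x), u⟫ ⬝ ⟪∇φ(x), v⟫`. -/
theorem morse_negLog_hessian_on_modes (d : ℕ)
    (K : ℝ → ℝ → ℝ) (a : ℝ)
    (hK_Ioc : ∀ z₁ z₂, K z₁ z₂ ∈ Set.Ioc (0 : ℝ) 1)
    (hK_diff : Differentiable ℝ (fun z => K z a))
    (hK_diff2 : Differentiable ℝ (deriv (fun z => K z a)))
    (hKaa : K a a = 1)
    (hK'aa : deriv (fun z => K z a) a = 0)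
    (φ : EuclideanSpace ℝ (Fin d) → ℝ)
    (hφ : Differentiable ℝ φ)
    (hφ2 : Differentiable ℝ (fderiv ℝ φ))
    (V : EuclideanSpace ℝ (Fin d) → ℝ)
    (hV : ∀ x, V x = -Real.log (K (φ x) a)) :
    ∀ x, φ x = a →
      ∀ u v : EuclideanSpace ℝ (Fin d),
        fderiv ℝ (fderiv ℝ V) x u v
          = -(deriv (deriv (fun z => K z a)) a) * (⟪gradient φ x, u⟫ * ⟪gradient φ x, v⟫) := by
  intro x hx u v
  have hK₀ : ∀ z, K z a ≠ 0 := fun z => (hK_Ioc z a).1.ne'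
  have hVcomp : V = (fun z => -Real.log (K z a)) ∘ φ := funext hV
  have hcrit : deriv (fun z => -Real.log (K z a)) a = 0 := by
    rw [deriv.fun_neg, deriv.log (hK_diff a) (hK₀ a), hK'aa, zero_div, neg_zero]
  have hsecond := hasDerivAt_deriv_neg_log_of_deriv_eq_zero hK_diff hK₀ (hK_diff2 a) hK'aa
  rw [hKaa, div_one] at hsecond
  rw [hVcomp, fderiv_fderiv_comp_apply_of_deriv_eq_zero (hK_diff.log hK₀).fun_neg hφ (hφ2 x) hx
    hsecond hcrit, inner_gradient_left, inner_gradient_left]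
end

section
/- Let K : ℝ × ℝ → ℝ be a function with values in (0, 1], twice differentiable in its first argument, satisfying K(a, a) = 1, (∂K/∂z₁)(a, a) = 0, and (∂²K/∂z₁²)(a, a) < 0 for a fixed a ∈ ℝ. Let φ : ℝ^d → ℝ be twice differentiable and set V(x) = −log K(φ(x), a). Then at every point x ∈ ℝ^d with φ(x) = a, a vector v ∈ ℝ^d satisfies ∇²V(x)(v, u) = 0 for all u ∈ ℝ^d if and only if ⟨∇φ(x), v⟩ = 0; that is, the null space of the Hessian of V at x is exactly the orthogonal complement of the span of ∇φ(x) (the tangent space to the level set {φ = a} at x whenever ∇φ(x) ≠ 0). In particular V satisfies the Morse–Bott non-degeneracy condition on the mode set M_a = {x : φ(x) = a}. -/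
/-!
Write `V = g ∘ φ` with `g = -log K(·, a)`. Since `K(·, a)` is critical at `a`, so is `g`, and
at a point with `φ x = a` the term `g'(φ x) ∇²φ(x)` of the chain rule for the Hessian vanishes:
`∇²V(x) = g''(a) ∇φ(x) ⊗ ∇φ(x)` with `g''(a) = -K''(a, a) / K(a, a) > 0`. A nonzero multiple of
`ℓ ⊗ ℓ` has null space `ker ℓ`.
-/

open RealInnerProductSpace

section SecondDerivative

variable {E : Type*} [NormedAddCommGroup E] [NormedSpace ℝ E]

theorem fderiv_fderiv_comp_apply_of_deriv_eq_zero_s5 {g : ℝ → ℝ} {f : E → ℝ} {x : E} {c : ℝ}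
    (hg : Differentiable ℝ g) (hf : Differentiable ℝ f)
    (hf2 : DifferentiableAt ℝ (fderiv ℝ f) x)
    (hg2 : HasDerivAt (deriv g) c (f x)) (hg' : deriv g (f x) = 0) (v u : E) :
    fderiv ℝ (fderiv ℝ (g ∘ f)) x v u = (c • fderiv ℝ f x).smulRight (fderiv ℝ f x) v u := by
  have hfirst : fderiv ℝ (g ∘ f) = fun y => deriv g (f y) • fderiv ℝ f y :=
    funext fun y => ((hg (f y)).hasDerivAt.comp_hasFDerivAt y (hf y).hasFDerivAt).fderiv
  have hsecond : HasFDerivAt (fun y => deriv g (f y) • fderiv ℝ f y) _ x :=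
    (hg2.comp_hasFDerivAt x (hf x).hasFDerivAt).smul hf2.hasFDerivAt
  rw [hfirst, hsecond.fderiv, Function.comp_apply, hg', zero_smul, zero_add]

end SecondDerivative

section NegLog

variable {k : ℝ → ℝ}

theorem deriv_neg_log_comp (hpos : ∀ z, 0 < k z) (hk : Differentiable ℝ k) :
    deriv (fun z => -Real.log (k z)) = fun z => -(deriv k z / k z) :=
  funext fun z => (((hk z).hasDerivAt.log (hpos z).ne').neg).deriv

theorem hasDerivAt_deriv_neg_log_comp_of_deriv_eq_zero (hpos : ∀ z, 0 < k z)
    (hk : Differentiable ℝ k) {a : ℝ} (hk2 : DifferentiableAt ℝ (deriv k) a)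
    (hk' : deriv k a = 0) :
    HasDerivAt (deriv fun z => -Real.log (k z)) (-(deriv (deriv k) a / k a)) a := by
  rw [deriv_neg_log_comp hpos hk]
  refine ((hk2.hasDerivAt.div (hk a).hasDerivAt (hpos a).ne').neg).congr_deriv ?_
  rw [hk', mul_zero, sub_zero, sq, mul_div_mul_right _ _ (hpos a).ne']

end NegLog

theorem forall_smulRight_apply_eq_zero_iff {E : Type*} [NormedAddCommGroup E] [NormedSpace ℝ E]
    {c : ℝ} (hc : c ≠ 0) (ℓ : E →L[ℝ] ℝ) (v : E) :
    (∀ u, (c • ℓ).smulRight ℓ v u = 0) ↔ ℓ v = 0 := by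
  simp only [ContinuousLinearMap.smulRight_apply, smul_apply, smul_eq_mul]
  refine ⟨fun h => ?_, fun h u => by simp [h]⟩
  simpa [hc] using h v

theorem morse_negLog_morseBott_general (d : ℕ)
    (K : ℝ → ℝ → ℝ) (a : ℝ)
    (hK_Ioc : ∀ z₁ z₂, K z₁ z₂ ∈ Set.Ioc (0 : ℝ) 1)
    (hK_diff : Differentiable ℝ (fun z => K z a))
    (hK_diff2 : Differentiable ℝ (deriv (fun z => K z a)))
    (hK'aa : deriv (fun z => K z a) a = 0)
    (hK''aa : deriv (deriv (fun z => K z a)) a < 0)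
    (φ : EuclideanSpace ℝ (Fin d) → ℝ)
    (hφ : Differentiable ℝ φ)
    (hφ2 : Differentiable ℝ (fderiv ℝ φ))
    (V : EuclideanSpace ℝ (Fin d) → ℝ)
    (hV : ∀ x, V x = -Real.log (K (φ x) a)) :
    ∀ x, φ x = a →
      ∀ v : EuclideanSpace ℝ (Fin d),
        (∀ u : EuclideanSpace ℝ (Fin d), fderiv ℝ (fderiv ℝ V) x v u = 0)
          ↔ ⟪gradient φ x, v⟫ = 0 := by
  intro x hx v
  set g : ℝ → ℝ := fun z => -Real.log (K z a)
  have hpos : ∀ z, 0 < K z a := fun z => (hK_Ioc z a).1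
  have hVg : V = g ∘ φ := funext hV
  have hg : Differentiable ℝ g := fun z => ((hK_diff z).log (hpos z).ne').neg
  have hg' : deriv g (φ x) = 0 := by
    simp [g, deriv_neg_log_comp hpos hK_diff, hx, hK'aa]
  have hg2 : HasDerivAt (deriv g) (-(deriv (deriv fun z => K z a) a / K a a)) (φ x) := by
    rw [hx]
    exact hasDerivAt_deriv_neg_log_comp_of_deriv_eq_zero hpos hK_diff (hK_diff2 a) hK'aa
  have hc : -(deriv (deriv fun z => K z a) a / K a a) ≠ 0 :=
    (neg_pos.2 (div_neg_of_neg_of_pos hK''aa (hpos a))).ne'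
  simp only [hVg, fderiv_fderiv_comp_apply_of_deriv_eq_zero_s5 hg hφ (hφ2 x) hg2 hg',
    inner_gradient_left]
  exact forall_smulRight_apply_eq_zero_iff hc _ v

/-- Under the hypotheses of Statement 4 together with
`(∂²K/∂z₁²)(a,a) < 0`, at every point `x` with `φ(x) = a` the null space of the Hessian of
`V(x) = -log K(φ(x), a)` is exactly the orthogonal complement of `∇φ(x)`: a vector `v`
satisfies `∇²V(x)(v,u) = 0` for all `u` iff `⟪∇φ(x), v⟫ = 0`.  This is the Morse–Bott
non-degeneracy condition for `V` on the mode set `M_a = {x : φ(x) = a}`. -/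
theorem morse_negLog_morseBott (d : ℕ)
    (K : ℝ → ℝ → ℝ) (a : ℝ)
    (hK_Ioc : ∀ z₁ z₂, K z₁ z₂ ∈ Set.Ioc (0 : ℝ) 1)
    (hK_diff : Differentiable ℝ (fun z => K z a))
    (hK_diff2 : Differentiable ℝ (deriv (fun z => K z a)))
    (hKaa : K a a = 1)
    (hK'aa : deriv (fun z => K z a) a = 0)
    (hK''aa : deriv (deriv (fun z => K z a)) a < 0)
    (φ : EuclideanSpace ℝ (Fin d) → ℝ)
    (hφ : Differentiable ℝ φ)
    (hφ2 : Differentiable ℝ (fderiv ℝ φ))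
    (V : EuclideanSpace ℝ (Fin d) → ℝ)
    (hV : ∀ x, V x = -Real.log (K (φ x) a)) :
    ∀ x, φ x = a →
      ∀ v : EuclideanSpace ℝ (Fin d),
        (∀ u : EuclideanSpace ℝ (Fin d), fderiv ℝ (fderiv ℝ V) x v u = 0)
          ↔ ⟪gradient φ x, v⟫ = 0 :=
  morse_negLog_morseBott_general d K a hK_Ioc hK_diff hK_diff2 hK'aa hK''aa φ hφ hφ2 V hV
end
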